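/- arXiv:1301.2850 — 2 statements merged into one kernel-verified Lean document; each statement's English description precedes it below -/
import Mathlib

section
/- Let A, B ∈ ℂ^{m×n} such that A·X = B has a Hermitian solution. Then A·X = B has a positive semi-definite Hermitian solution X ≥ 0 if and only if A·B* ≥ 0 and r(A·B*) = r(B). -/
/-!
If `X ≥ 0` solves `A * X = B`, then `A * Bᴴ = A * X * Aᴴ` is positive semidefinite, and writing
`X = Yᴴ * Y` shows that it has the rank of `A * X = B`. Conversely, since `G := A * Bᴴ` is
Hermitian, `G = B * Aᴴ`, so the rank condition says that `G` and `B` have the same column space.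
For any positive semidefinite generalized inverse `G'` of `G` (from the functional calculus
applied to `x ↦ x⁻¹`), `X := Bᴴ * G' * B` is then a positive semidefinite solution, because
`A * X = G * G' * B = B`.
-/

open Matrix ComplexOrder

/-- `X` satisfies the four Penrose equations for `A`, i.e. `X` is the
Moore–Penrose inverse of `A`. -/
def IsMP {m n : Type*} [Fintype m] [Fintype n]
    (A : Matrix m n ℂ) (X : Matrix n m ℂ) : Prop :=
  A * X * A = A ∧ X * A * X = X ∧ (A * X)ᴴ = A * X ∧ (X * A)ᴴ = X * A

/-- the number of positive eigenvalues (with multiplicity) of a Hermitian matrix -/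
noncomputable def iPos {n : Type*} [Fintype n] [DecidableEq n] {A : Matrix n n ℂ}
    (hA : A.IsHermitian) : ℕ := Nat.card {i // 0 < hA.eigenvalues i}

/-- the number of negative eigenvalues (with multiplicity) of a Hermitian matrix -/
noncomputable def iNeg {n : Type*} [Fintype n] [DecidableEq n] {A : Matrix n n ℂ}
    (hA : A.IsHermitian) : ℕ := Nat.card {i // hA.eigenvalues i < 0}

namespace Matrix

section Field

variable {m n p R : Type*} [Fintype n] [Fintype p] [Field R]

theorem range_mulVecLin_mul_eq_of_rank_eq {B : Matrix m n R} {C : Matrix n p R}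
    (h : (B * C).rank = B.rank) :
    LinearMap.range (B * C).mulVecLin = LinearMap.range B.mulVecLin := by
  refine Submodule.eq_of_le_of_finrank_le ?_ h.ge
  rw [mulVecLin_mul]
  exact LinearMap.range_comp_le_range _ _

theorem mul_mul_eq_of_range_le [Fintype m] {G : Matrix m p R} {G' : Matrix p m R}
    {B : Matrix m n R} (hG : G * G' * G = G)
    (h : LinearMap.range B.mulVecLin ≤ LinearMap.range G.mulVecLin) :
    G * G' * B = B := by
  refine mulVec_injective (funext fun v => ?_)
  obtain ⟨x, hx⟩ := h ⟨v, rfl⟩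
  simp only [mulVecLin_apply] at hx
  rw [← mulVec_mulVec, ← hx, mulVec_mulVec, hG]

end Field

section RCLike

variable {m n 𝕜 : Type*} [Fintype m] [Fintype n] [DecidableEq n] [RCLike 𝕜]

open scoped MatrixOrder

theorem PosSemidef.exists_posSemidef_mul_mul_self_eq {G : Matrix n n 𝕜} (hG : G.PosSemidef) :
    ∃ G' : Matrix n n 𝕜, G'.PosSemidef ∧ G * G' * G = G := by
  have hcont (f : ℝ → ℝ) : ContinuousOn f (spectrum ℝ G) := G.finite_real_spectrum.continuousOn f
  refine ⟨cfc (·⁻¹ : ℝ → ℝ) G, ?_, ?_⟩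
  · rw [← nonneg_iff_posSemidef]
    exact cfc_nonneg fun x hx => inv_nonneg.2 (spectrum_nonneg_of_nonneg hG.nonneg hx)
  · have h : cfc (fun x : ℝ => x * x⁻¹ * x) G = G :=
      (cfc_congr fun x _ => mul_inv_mul_cancel x).trans (cfc_id' ℝ G)
    rwa [cfc_mul _ _ _ (hcont _) (hcont _), cfc_mul _ _ _ (hcont _) (hcont _), cfc_id' ℝ G] at h

theorem PosSemidef.rank_mul_mul_conjTranspose {X : Matrix n n 𝕜} (hX : X.PosSemidef)
    (A : Matrix m n 𝕜) : (A * X * Aᴴ).rank = (A * X).rank := by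
  obtain ⟨Y, rfl⟩ := CStarAlgebra.nonneg_iff_eq_star_mul_self.mp hX.nonneg
  rw [star_eq_conjTranspose]
  have h : A * (Yᴴ * Y) * Aᴴ = (A * Yᴴ) * (A * Yᴴ)ᴴ := by
    rw [conjTranspose_mul, conjTranspose_conjTranspose]
    simp only [Matrix.mul_assoc]
  refine le_antisymm (rank_mul_le_left _ _) ?_
  calc (A * (Yᴴ * Y)).rank = (A * Yᴴ * Y).rank := by rw [Matrix.mul_assoc]
    _ ≤ (A * Yᴴ).rank := rank_mul_le_left _ _
    _ = (A * (Yᴴ * Y) * Aᴴ).rank := by rw [h, rank_self_mul_conjTranspose]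

end RCLike

end Matrix

theorem stmt16_general (m n : ℕ) (A B : Matrix (Fin m) (Fin n) ℂ) :
    (∃ X : Matrix (Fin n) (Fin n) ℂ, X.PosSemidef ∧ A * X = B) ↔
      ((A * Bᴴ).PosSemidef ∧ (A * Bᴴ).rank = B.rank) := by
  constructor
  · rintro ⟨X, hX, rfl⟩
    have h : A * (A * X)ᴴ = A * X * Aᴴ := by
      rw [conjTranspose_mul, hX.isHermitian.eq, Matrix.mul_assoc]
    rw [h]
    exact ⟨hX.mul_mul_conjTranspose_same A, hX.rank_mul_mul_conjTranspose A⟩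
  · rintro ⟨hG, hrank⟩
    obtain ⟨G', hG', hGG'⟩ := hG.exists_posSemidef_mul_mul_self_eq
    have hBA : B * Aᴴ = A * Bᴴ := by
      simpa only [conjTranspose_mul, conjTranspose_conjTranspose] using hG.isHermitian.eq
    have hrange := range_mulVecLin_mul_eq_of_rank_eq (hBA ▸ hrank)
    refine ⟨Bᴴ * G' * B, hG'.conjTranspose_mul_mul_same B, ?_⟩
    rw [← Matrix.mul_assoc, ← Matrix.mul_assoc]
    exact mul_mul_eq_of_range_le hGG' (hBA ▸ hrange).ge

theorem stmt16 (m n : ℕ) (A B : Matrix (Fin m) (Fin n) ℂ)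
    (hcons : ∃ X : Matrix (Fin n) (Fin n) ℂ, X.IsHermitian ∧ A * X = B) :
    (∃ X : Matrix (Fin n) (Fin n) ℂ, X.PosSemidef ∧ A * X = B) ↔
      ((A * Bᴴ).PosSemidef ∧ (A * Bᴴ).rank = B.rank) :=
  stmt16_general m n A B
end

section
/- Assume A·X = B has a Hermitian solution (A, B ∈ ℂ^{m×n}) and let P ∈ ℂ^{n×n} be Hermitian. Then the maximum of r(X - P) over Hermitian solutions X of A·X = B equals r(B - A·P) - r(A) + n, and the minimum equals 2·r(B - A·P) - r(B·A* - A·P·A*). -/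
open Matrix ComplexOrder

/-!
Put `Y = X - P`; the Hermitian solutions are then the Hermitian `Y` with `A Y = A Y₀` for one of
them. Sylvester's inequality `r(A) + r(Y) ≤ r(AY) + n` and Frobenius' inequality
`r(AY) + r(YAᴴ) ≤ r(Y) + r(AYAᴴ)`, with `YAᴴ = (AY)ᴴ`, bound `r(Y)` from above and below.
Let `Q` be the orthogonal projection onto the range of `Aᴴ`, so that `A Y = A Y₀` iff `Q Y = Q Y₀`.
With respect to `range Q ⊕ ker Q` a solution is `[[F, G], [Gᴴ, H]]` with `F = Q Y₀ Q`,
`G = Q Y₀ (1 - Q)` fixed and `H` free. The choice `H = Gᴴ T G`, with `T` a Hermitian generalized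
inverse of `F`, attains the lower bound; `H = Gᴴ T G + 1` forces `ker Y ⊆ range Q`, which is the
equality case of Sylvester's inequality.
-/

open Module

namespace Matrix

section Field

variable {l m n k K : Type*} [Field K] [Fintype n]

theorem rank_mul_add_finrank_ker_inf_range [Fintype k] (M : Matrix m n K) (N : Matrix n k K) :
    (M * N).rank + finrank K ↥(LinearMap.ker M.mulVecLin ⊓ LinearMap.range N.mulVecLin) =
      N.rank := by
  set W := LinearMap.range N.mulVecLin
  have h := LinearMap.finrank_range_add_finrank_ker (M.mulVecLin.domRestrict W)
  rwa [LinearMap.range_domRestrict, ← LinearMap.range_comp, ← mulVecLin_mul,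
    LinearMap.ker_domRestrict, ← Submodule.finrank_map_subtype_eq, Submodule.map_comap_subtype,
    inf_comm] at h

theorem rank_add_finrank_ker (M : Matrix m n K) :
    M.rank + finrank K ↥(LinearMap.ker M.mulVecLin) = Fintype.card n := by
  rw [rank, LinearMap.finrank_range_add_finrank_ker, finrank_fintype_fun_eq_card]

theorem rank_add_rank_le_rank_mul_add_card [Fintype k] (M : Matrix m n K) (N : Matrix n k K) :
    M.rank + N.rank ≤ (M * N).rank + Fintype.card n := by
  have hinf := Submodule.finrank_mono
    (inf_le_left : LinearMap.ker M.mulVecLin ⊓ LinearMap.range N.mulVecLin ≤ _)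
  have hMN := rank_mul_add_finrank_ker_inf_range M N
  have hM := rank_add_finrank_ker M
  omega

theorem rank_mul_add_rank_mul_le [Fintype m] [Fintype k] (M : Matrix l m K) (Y : Matrix m n K)
    (N : Matrix n k K) : (M * Y).rank + (Y * N).rank ≤ Y.rank + (M * Y * N).rank := by
  have hrange : LinearMap.range (Y * N).mulVecLin ≤ LinearMap.range Y.mulVecLin := by
    rw [mulVecLin_mul]
    exact LinearMap.range_comp_le_range _ _
  have hinf := Submodule.finrank_mono (inf_le_inf_left (LinearMap.ker M.mulVecLin) hrange)
  have hMY := rank_mul_add_finrank_ker_inf_range M Y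
  have hMYN := rank_mul_add_finrank_ker_inf_range M (Y * N)
  rw [← Matrix.mul_assoc] at hMYN
  omega

theorem rank_add_le (M N : Matrix m n K) : (M + N).rank ≤ M.rank + N.rank := by
  have hrange : LinearMap.range (M + N).mulVecLin ≤
      LinearMap.range M.mulVecLin ⊔ LinearMap.range N.mulVecLin := by
    rw [mulVecLin_add]
    exact LinearMap.range_add_le _ _
  exact (Submodule.finrank_mono hrange).trans (Submodule.finrank_add_le_finrank_add_finrank _ _)

theorem rank_add_rank_le_rank_add [Fintype m] [DecidableEq n] {M₁ M₂ : Matrix m n K}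
    {P : Matrix m m K} {R : Matrix n n K} (hP₁ : P * M₁ = M₁) (hP₂ : P * M₂ = 0)
    (hR₁ : M₁ * R = M₁) (hR₂ : M₂ * R = 0) : M₁.rank + M₂.rank ≤ (M₁ + M₂).rank := by
  have hrange : LinearMap.range M₂.mulVecLin ≤
      LinearMap.ker P.mulVecLin ⊓ LinearMap.range (M₁ + M₂).mulVecLin := by
    have hM₂ : M₂ = (M₁ + M₂) * (1 - R) := by
      rw [Matrix.mul_sub, Matrix.mul_one, Matrix.add_mul, hR₁, hR₂]; abel
    refine le_inf ?_ ?_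
    · rw [LinearMap.range_le_ker_iff, ← mulVecLin_mul, hP₂, mulVecLin_zero]
    · conv_lhs => rw [hM₂, mulVecLin_mul]
      exact LinearMap.range_comp_le_range _ _
  have hsum := rank_mul_add_finrank_ker_inf_range P (M₁ + M₂)
  rw [Matrix.mul_add, hP₁, hP₂, add_zero] at hsum
  exact (Nat.add_le_add_left (Submodule.finrank_mono hrange) _).trans_eq hsum

theorem rank_add_rank_eq_of_ker_le_range [Fintype k] {M : Matrix m n K} {N : Matrix n k K}
    (h : LinearMap.ker M.mulVecLin ≤ LinearMap.range N.mulVecLin) :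
    M.rank + N.rank = (M * N).rank + Fintype.card n := by
  have hMN := rank_mul_add_finrank_ker_inf_range M N
  rw [inf_eq_left.mpr h] at hMN
  have hM := rank_add_finrank_ker M
  omega

theorem rank_mul_mul_eq_rank_mul [Fintype m] [Fintype k] {A : Matrix m n K} {L : Matrix n m K}
    (hL : A * L * A = A) (Z : Matrix n k K) : (L * A * Z).rank = (A * Z).rank := by
  refine le_antisymm ?_ ?_
  · rw [Matrix.mul_assoc]
    exact rank_mul_le_right _ _
  · calc (A * Z).rank = (A * (L * A * Z)).rank := by simp only [← Matrix.mul_assoc, hL]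
      _ ≤ (L * A * Z).rank := rank_mul_le_right _ _

theorem mul_eq_mul_of_mul_mul_eq [Fintype m] {A : Matrix m n K} {L : Matrix n m K}
    (hL : A * L * A = A) {Y Y' : Matrix n k K} (h : L * A * Y = L * A * Y') : A * Y = A * Y' :=
  calc A * Y = A * (L * A * Y) := by rw [← Matrix.mul_assoc, ← Matrix.mul_assoc, hL]
    _ = A * Y' := by rw [h, ← Matrix.mul_assoc, ← Matrix.mul_assoc, hL]

end Field

variable {m n 𝕜 : Type*} [RCLike 𝕜] [Fintype n]

theorem IsHermitian.exists_isHermitian_mul_mul_eq_self [DecidableEq n] {S : Matrix n n 𝕜}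
    (hS : S.IsHermitian) :
    ∃ T : Matrix n n 𝕜, T.IsHermitian ∧ S * T * S = S := by
  have hcont (f : ℝ → ℝ) : ContinuousOn f (spectrum ℝ S) :=
    finite_real_spectrum.continuousOn f
  refine ⟨cfc (·⁻¹ : ℝ → ℝ) S, cfc_predicate _ S, ?_⟩
  calc S * cfc (·⁻¹ : ℝ → ℝ) S * S = cfc (fun x : ℝ => x * x⁻¹ * x) S := by
        rw [cfc_mul _ _ S (hcont _) (hcont _), cfc_mul _ _ S (hcont _) (hcont _), cfc_id' ℝ S]
    _ = S := by simp only [mul_inv_mul_cancel, cfc_id' ℝ S]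

theorem exists_mul_mul_eq_self_isHermitian_mul [Fintype m] [DecidableEq m]
    (A : Matrix m n 𝕜) : ∃ L : Matrix n m 𝕜, A * L * A = A ∧ (L * A).IsHermitian := by
  obtain ⟨T, hT, hKTK⟩ := (isHermitian_mul_conjTranspose_self A).exists_isHermitian_mul_mul_eq_self
  refine ⟨Aᴴ * T, ?_, by simpa only [Matrix.mul_assoc] using isHermitian_conjTranspose_mul_mul A hT⟩
  have hK : (A * Aᴴ * T - 1) * (A * Aᴴ) = 0 := by
    rw [Matrix.sub_mul, hKTK, Matrix.one_mul, sub_self]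
  rw [mul_self_mul_conjTranspose_eq_zero, Matrix.sub_mul, Matrix.one_mul, sub_eq_zero] at hK
  simpa only [Matrix.mul_assoc] using hK

theorem rank_mul_mul_mul_eq_rank_mul_mul_conjTranspose [Fintype m] {A : Matrix m n 𝕜}
    {L : Matrix n m 𝕜} (hL : A * L * A = A) (hLA : (L * A).IsHermitian) (Z : Matrix n n 𝕜) :
    (L * A * Z * (L * A)).rank = (A * Z * Aᴴ).rank := by
  have hQ : L * A = Aᴴ * Lᴴ := hLA.eq.symm.trans (conjTranspose_mul L A)
  have hAQ : L * A * Aᴴ = Aᴴ := by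
    rw [← hLA.eq, ← conjTranspose_mul, ← Matrix.mul_assoc, hL]
  refine le_antisymm ?_ ?_
  · calc (L * A * Z * (L * A)).rank = (L * (A * Z * Aᴴ) * Lᴴ).rank := by
          nth_rewrite 2 [hQ]; simp only [Matrix.mul_assoc]
      _ ≤ (A * Z * Aᴴ).rank := (rank_mul_le_left _ _).trans (rank_mul_le_right _ _)
  · calc (A * Z * Aᴴ).rank = (A * L * A * Z * (L * A * Aᴴ)).rank := by rw [hL, hAQ]
      _ = (A * (L * A * Z * (L * A)) * Aᴴ).rank := by simp only [Matrix.mul_assoc]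
      _ ≤ (L * A * Z * (L * A)).rank := (rank_mul_le_left _ _).trans (rank_mul_le_right _ _)

theorem two_mul_rank_mul_le_rank_add_rank_mul_mul_conjTranspose [Fintype m]
    (A : Matrix m n 𝕜) {Y : Matrix n n 𝕜} (hY : Y.IsHermitian) :
    2 * (A * Y).rank ≤ Y.rank + (A * Y * Aᴴ).rank := by
  have h := rank_mul_add_rank_mul_le A Y Aᴴ
  rwa [← hY.eq, ← conjTranspose_mul, rank_conjTranspose, hY.eq, ← two_mul] at h

section HermitianCompletion

variable [DecidableEq n] {Q Y T : Matrix n n 𝕜}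

/-- With respect to `range Q ⊕ ker Q`, for an orthogonal projection `Q`, this is the block matrix
`[[F, G], [Gᴴ, Gᴴ T G]]` with `F = Q Y Q` and `G = Q Y (1 - Q)`; it shares its first block row
with `Y`. -/
def hermitianCompletion (Q Y T : Matrix n n 𝕜) : Matrix n n 𝕜 :=
  Q * Y + (1 - Q) * Y * Q + (1 - Q) * Y * Q * T * (Q * Y * (1 - Q))

theorem isHermitian_hermitianCompletion (hQ : Q.IsHermitian) (hY : Y.IsHermitian)
    (hT : T.IsHermitian) : (hermitianCompletion Q Y T).IsHermitian := by
  simp only [IsHermitian, hermitianCompletion, conjTranspose_add, conjTranspose_mul,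
    conjTranspose_sub, conjTranspose_one, hQ.eq, hY.eq, hT.eq]
  noncomm_ring

theorem mul_hermitianCompletion (hQQ : Q * Q = Q) : Q * hermitianCompletion Q Y T = Q * Y :=
  calc Q * hermitianCompletion Q Y T
      = Q * Q * Y + (Q - Q * Q) * (Y * Q + Y * Q * T * (Q * Y * (1 - Q))) := by
        simp only [hermitianCompletion]; noncomm_ring
    _ = Q * Y := by rw [hQQ, sub_self, Matrix.zero_mul, add_zero]

theorem mul_hermitianCompletion_add_one_sub (hQQ : Q * Q = Q) :
    Q * (hermitianCompletion Q Y T + (1 - Q)) = Q * Y := by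
  rw [Matrix.mul_add, mul_hermitianCompletion hQQ, Matrix.mul_sub, Matrix.mul_one, hQQ, sub_self,
    add_zero]

theorem rank_hermitianCompletion_add_rank_le (hQ : Q.IsHermitian) (hQQ : Q * Q = Q)
    (hY : Y.IsHermitian) (hFTF : Q * Y * Q * T * (Q * Y * Q) = Q * Y * Q) :
    (hermitianCompletion Q Y T).rank + (Q * Y * Q).rank ≤ 2 * (Q * Y).rank := by
  set F := Q * Y * Q
  set Gh := (1 - Q) * Y * Q
  have hW : hermitianCompletion Q Y T = (Q + Gh * T) * (Q * Y) + (Gh - Gh * T * F) := by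
    rw [Matrix.add_mul, ← Matrix.mul_assoc Q Q Y, hQQ]
    simp only [hermitianCompletion, F, Gh]
    noncomm_ring
  have hsplit : F + (Gh - Gh * T * F) = (1 - Gh * T * Q) * (Y * Q) := by
    simp only [F, Gh]; noncomm_ring
  have hrankW : (hermitianCompletion Q Y T).rank ≤ (Q * Y).rank + (Gh - Gh * T * F).rank := by
    rw [hW]
    exact (rank_add_le _ _).trans (Nat.add_le_add_right (rank_mul_le_right _ _) _)
  have hblock : F.rank + (Gh - Gh * T * F).rank ≤ (F + (Gh - Gh * T * F)).rank := by
    refine rank_add_rank_le_rank_add (P := Q) (R := T * F) ?_ ?_ ?_ ?_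
    · simp only [F, ← Matrix.mul_assoc, hQQ]
    · calc Q * (Gh - Gh * T * F) = (Q - Q * Q) * (Y * Q - Y * Q * T * F) := by
            simp only [Gh]; noncomm_ring
        _ = 0 := by rw [hQQ, sub_self, Matrix.zero_mul]
    · rw [← Matrix.mul_assoc, hFTF]
    · calc (Gh - Gh * T * F) * (T * F) = Gh * T * F - Gh * T * (F * T * F) := by noncomm_ring
        _ = 0 := by rw [hFTF, sub_self]
  have hYQ : (Y * Q).rank = (Q * Y).rank := by
    rw [← rank_conjTranspose, conjTranspose_mul, hQ.eq, hY.eq]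
  have hrankF : (F + (Gh - Gh * T * F)).rank ≤ (Q * Y).rank := by
    rw [hsplit, ← hYQ]
    exact rank_mul_le_right _ _
  omega

theorem conjTranspose_mul_hermitianCompletion_mul_eq_zero
    (hQ : Q.IsHermitian) (hY : Y.IsHermitian) (hFTF : Q * Y * Q * T * (Q * Y * Q) = Q * Y * Q)
    {M : Matrix n n 𝕜} (hM : Q * Y * M = 0) : Mᴴ * hermitianCompletion Q Y T * M = 0 := by
  have hM' : Mᴴ * Y * Q = 0 := by
    simpa only [conjTranspose_mul, hQ.eq, hY.eq, conjTranspose_zero, Matrix.mul_assoc]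
      using congrArg conjTranspose hM
  calc Mᴴ * hermitianCompletion Q Y T * M
      = Mᴴ * (Q * Y * M) + (Mᴴ * Y * Q - Mᴴ * Q * Y * Q) * T * (Q * Y * M - Q * Y * Q * M)
          + Mᴴ * Y * Q * M - Mᴴ * (Q * Y * Q) * M := by
        simp only [hermitianCompletion]; noncomm_ring
    _ = Mᴴ * (Q * Y * Q * T * (Q * Y * Q)) * M - Mᴴ * (Q * Y * Q) * M := by
        rw [hM, hM']; noncomm_ring
    _ = 0 := by rw [hFTF, sub_self]

theorem one_sub_mul_eq_zero_of_hermitianCompletion_add_mul_eq_zero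
    (hQ : Q.IsHermitian) (hQQ : Q * Q = Q) (hY : Y.IsHermitian)
    (hFTF : Q * Y * Q * T * (Q * Y * Q) = Q * Y * Q) {M : Matrix n n 𝕜}
    (hM : (hermitianCompletion Q Y T + (1 - Q)) * M = 0) : (1 - Q) * M = 0 := by
  have hQY : Q * Y * M = 0 :=
    calc Q * Y * M = Q * (hermitianCompletion Q Y T + (1 - Q)) * M := by
          rw [mul_hermitianCompletion_add_one_sub hQQ]
      _ = 0 := by rw [Matrix.mul_assoc, hM, Matrix.mul_zero]
  have hWM := conjTranspose_mul_hermitianCompletion_mul_eq_zero hQ hY hFTF hQY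
  rw [← conjTranspose_mul_self_eq_zero]
  calc ((1 - Q) * M)ᴴ * ((1 - Q) * M)
      = Mᴴ * (hermitianCompletion Q Y T + (1 - Q)) * M - Mᴴ * hermitianCompletion Q Y T * M
          + Mᴴ * (Q * Q - Q) * M := by
        rw [conjTranspose_mul, conjTranspose_sub, conjTranspose_one, hQ.eq]; noncomm_ring
    _ = 0 := by rw [Matrix.mul_assoc, hM, hWM, hQQ]; simp

theorem ker_hermitianCompletion_add_le_range (hQ : Q.IsHermitian) (hQQ : Q * Q = Q)
    (hY : Y.IsHermitian) (hFTF : Q * Y * Q * T * (Q * Y * Q) = Q * Y * Q) :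
    LinearMap.ker (hermitianCompletion Q Y T + (1 - Q)).mulVecLin ≤
      LinearMap.range Q.mulVecLin := by
  intro v hv
  rw [LinearMap.mem_ker, mulVecLin_apply] at hv
  have hcol := one_sub_mul_eq_zero_of_hermitianCompletion_add_mul_eq_zero hQ hQQ hY hFTF
    (M := replicateCol n v) (by rw [← replicateCol_mulVec, hv, replicateCol_zero])
  rw [← replicateCol_mulVec] at hcol
  have hv' : (1 - Q) *ᵥ v = 0 := funext fun i => congrFun (congrFun hcol i) i
  rw [sub_mulVec, one_mulVec, sub_eq_zero] at hv'
  exact ⟨v, hv'.symm⟩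

theorem rank_hermitianCompletion_add_add_rank (hQ : Q.IsHermitian) (hQQ : Q * Q = Q)
    (hY : Y.IsHermitian) (hT : T.IsHermitian)
    (hFTF : Q * Y * Q * T * (Q * Y * Q) = Q * Y * Q) :
    (hermitianCompletion Q Y T + (1 - Q)).rank + Q.rank = (Q * Y).rank + Fintype.card n := by
  have hW : (hermitianCompletion Q Y T + (1 - Q)).IsHermitian :=
    (isHermitian_hermitianCompletion hQ hY hT).add (isHermitian_one.sub hQ)
  rw [rank_add_rank_eq_of_ker_le_range (ker_hermitianCompletion_add_le_range hQ hQQ hY hFTF),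
    ← rank_conjTranspose, conjTranspose_mul, hW.eq, hQ.eq, mul_hermitianCompletion_add_one_sub hQQ]

theorem IsHermitian.exists_isHermitian_mul_eq_rank_add_le (hQ : Q.IsHermitian) (hQQ : Q * Q = Q)
    (hY : Y.IsHermitian) :
    ∃ Y' : Matrix n n 𝕜, Y'.IsHermitian ∧ Q * Y' = Q * Y ∧
      Y'.rank + (Q * Y * Q).rank ≤ 2 * (Q * Y).rank := by
  have hF : (Q * Y * Q).IsHermitian := by
    simpa only [hQ.eq] using isHermitian_conjTranspose_mul_mul Q hY
  obtain ⟨T, hT, hFTF⟩ := hF.exists_isHermitian_mul_mul_eq_self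
  exact ⟨hermitianCompletion Q Y T, isHermitian_hermitianCompletion hQ hY hT,
    mul_hermitianCompletion hQQ, rank_hermitianCompletion_add_rank_le hQ hQQ hY hFTF⟩

theorem IsHermitian.exists_isHermitian_mul_eq_rank_add_eq (hQ : Q.IsHermitian) (hQQ : Q * Q = Q)
    (hY : Y.IsHermitian) :
    ∃ Y' : Matrix n n 𝕜, Y'.IsHermitian ∧ Q * Y' = Q * Y ∧
      Y'.rank + Q.rank = (Q * Y).rank + Fintype.card n := by
  have hF : (Q * Y * Q).IsHermitian := by
    simpa only [hQ.eq] using isHermitian_conjTranspose_mul_mul Q hY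
  obtain ⟨T, hT, hFTF⟩ := hF.exists_isHermitian_mul_mul_eq_self
  exact ⟨hermitianCompletion Q Y T + (1 - Q),
    (isHermitian_hermitianCompletion hQ hY hT).add (isHermitian_one.sub hQ),
    mul_hermitianCompletion_add_one_sub hQQ,
    rank_hermitianCompletion_add_add_rank hQ hQQ hY hT hFTF⟩

end HermitianCompletion

section HermitianSolution

variable [Fintype m] [DecidableEq m] [DecidableEq n] (A : Matrix m n 𝕜) {Y₀ : Matrix n n 𝕜}

theorem isGreatest_rank_hermitian_solution (hY₀ : Y₀.IsHermitian) :
    IsGreatest {k | ∃ Y : Matrix n n 𝕜, Y.IsHermitian ∧ A * Y = A * Y₀ ∧ k = Y.rank}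
      ((A * Y₀).rank + Fintype.card n - A.rank) := by
  obtain ⟨L, hL, hLA⟩ := exists_mul_mul_eq_self_isHermitian_mul A
  have hQQ : L * A * (L * A) = L * A := by rw [Matrix.mul_assoc, ← Matrix.mul_assoc A, hL]
  have hQA : (L * A).rank = A.rank := by
    simpa only [Matrix.mul_one] using rank_mul_mul_eq_rank_mul hL (1 : Matrix n n 𝕜)
  obtain ⟨Y, hY, hQY, hrank⟩ := hLA.exists_isHermitian_mul_eq_rank_add_eq hQQ hY₀
  rw [rank_mul_mul_eq_rank_mul hL, hQA] at hrank
  refine ⟨⟨Y, hY, mul_eq_mul_of_mul_mul_eq hL hQY, by omega⟩, ?_⟩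
  rintro k ⟨Y, -, hAY, rfl⟩
  have hsylvester := rank_add_rank_le_rank_mul_add_card A Y
  rw [hAY] at hsylvester
  omega

theorem isLeast_rank_hermitian_solution (hY₀ : Y₀.IsHermitian) :
    IsLeast {k | ∃ Y : Matrix n n 𝕜, Y.IsHermitian ∧ A * Y = A * Y₀ ∧ k = Y.rank}
      (2 * (A * Y₀).rank - (A * Y₀ * Aᴴ).rank) := by
  have hlower : ∀ Y : Matrix n n 𝕜, Y.IsHermitian → A * Y = A * Y₀ →
      2 * (A * Y₀).rank ≤ Y.rank + (A * Y₀ * Aᴴ).rank := fun Y hY hAY => by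
    simpa only [hAY] using two_mul_rank_mul_le_rank_add_rank_mul_mul_conjTranspose A hY
  obtain ⟨L, hL, hLA⟩ := exists_mul_mul_eq_self_isHermitian_mul A
  have hQQ : L * A * (L * A) = L * A := by rw [Matrix.mul_assoc, ← Matrix.mul_assoc A, hL]
  obtain ⟨Y, hY, hQY, hrank⟩ := hLA.exists_isHermitian_mul_eq_rank_add_le hQQ hY₀
  rw [rank_mul_mul_eq_rank_mul hL, rank_mul_mul_mul_eq_rank_mul_mul_conjTranspose hL hLA] at hrank
  have hAY := mul_eq_mul_of_mul_mul_eq hL hQY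
  refine ⟨⟨Y, hY, hAY, by have hY' := hlower Y hY hAY; omega⟩, ?_⟩
  rintro k ⟨Y, hY, hAY, rfl⟩
  have hY' := hlower Y hY hAY
  omega

end HermitianSolution

end Matrix

theorem stmt18 (m n : ℕ) (A B : Matrix (Fin m) (Fin n) ℂ)
    (hcons : ∃ X : Matrix (Fin n) (Fin n) ℂ, X.IsHermitian ∧ A * X = B)
    (P : Matrix (Fin n) (Fin n) ℂ) (hP : P.IsHermitian) :
    IsGreatest {k | ∃ X : Matrix (Fin n) (Fin n) ℂ, X.IsHermitian ∧ A * X = B ∧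
        k = (X - P).rank} ((B - A * P).rank + n - A.rank) ∧
    IsLeast {k | ∃ X : Matrix (Fin n) (Fin n) ℂ, X.IsHermitian ∧ A * X = B ∧
        k = (X - P).rank}
      (2 * (B - A * P).rank - (B * Aᴴ - A * P * Aᴴ).rank) := by
  obtain ⟨X₀, hX₀, hAX₀⟩ := hcons
  have hsolutions : {k | ∃ X : Matrix (Fin n) (Fin n) ℂ, X.IsHermitian ∧ A * X = B ∧
      k = (X - P).rank} = {k | ∃ Y : Matrix (Fin n) (Fin n) ℂ, Y.IsHermitian ∧
      A * Y = A * (X₀ - P) ∧ k = Y.rank} := by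
    ext k
    constructor
    · rintro ⟨X, hX, hAX, rfl⟩
      exact ⟨X - P, hX.sub hP, by rw [Matrix.mul_sub, Matrix.mul_sub, hAX, hAX₀], rfl⟩
    · rintro ⟨Y, hY, hAY, rfl⟩
      refine ⟨Y + P, hY.add hP, ?_, by rw [add_sub_cancel_right]⟩
      rw [Matrix.mul_add, hAY, Matrix.mul_sub, hAX₀, sub_add_cancel]
  have hBAP : B - A * P = A * (X₀ - P) := by rw [Matrix.mul_sub, hAX₀]
  have hBAPA : B * Aᴴ - A * P * Aᴴ = A * (X₀ - P) * Aᴴ := by rw [← Matrix.sub_mul, hBAP]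
  rw [hsolutions, hBAP, hBAPA]
  have hmax := isGreatest_rank_hermitian_solution A (hX₀.sub hP)
  rw [Fintype.card_fin] at hmax
  exact ⟨hmax, isLeast_rank_hermitian_solution A (hX₀.sub hP)⟩
end
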